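/- A snake graph G = (G_1, ..., G_n) with n ≥ 2 admits a sign function in which every interior (glued) edge has sign '−' if and only if G is a zig-zag snake graph. -/

import Mathlib

/-!
If `e_i` and `e_{i+1}` are glued in the same direction, they are opposite sides of tile `i + 1`,
which every sign function separates. Conversely, the parity of the antidiagonal `x + y` is a sign
function, and at each turn of a snake the interior edges before and after the turn lie on
antidiagonals of the same parity, so in a zig-zag snake this sign function is constant on all
interior edges.
-/

namespace SnakeGraph

/-- A vertex of the square lattice. -/
abbrev Vertex : Type := ℤ × ℤ

/-- An edge of the square lattice: a base vertex together with `true` for a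
horizontal edge (from `v` to `v + (1,0)`) or `false` for a vertical edge
(from `v` to `v + (0,1)`). -/
abbrev Edge : Type := Vertex × Bool

/-- The two endpoints of an edge. -/
def endpoints (e : Edge) : Finset Vertex :=
  {e.1, if e.2 then (e.1.1 + 1, e.1.2) else (e.1.1, e.1.2 + 1)}

/-- The gluing direction between two consecutive tiles of a snake graph:
the north or the east edge of a tile is glued to the south, resp. west,
edge of the next tile. -/
inductive Dir : Type
  | east : Dir
  | north : Dir
deriving DecidableEq

def stepDir : Dir → Vertex
  | .east => (1, 0)
  | .north => (0, 1)

/-- The position (south-west corner) of the `i`-th tile (tiles are 0-indexed),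
for the snake graph with gluing directions `d 0, d 1, ...`. -/
def tilePos (d : ℕ → Dir) : ℕ → Vertex
  | 0 => (0, 0)
  | i + 1 => tilePos d i + stepDir (d i)

/-- South edge of the tile with south-west corner `p`. -/
def S (p : Vertex) : Edge := (p, true)

/-- North edge of the tile with south-west corner `p`. -/
def N (p : Vertex) : Edge := ((p.1, p.2 + 1), true)

/-- West edge of the tile with south-west corner `p`. -/
def W (p : Vertex) : Edge := (p, false)

/-- East edge of the tile with south-west corner `p`. -/
def E (p : Vertex) : Edge := ((p.1 + 1, p.2), false)

/-- The four edges of the tile with south-west corner `p`. -/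
def tileEdges (p : Vertex) : Finset Edge := {S p, N p, W p, E p}

/-- The four vertices of the tile with south-west corner `p`. -/
def tileVertices (p : Vertex) : Finset Vertex :=
  {p, (p.1 + 1, p.2), (p.1, p.2 + 1), (p.1 + 1, p.2 + 1)}

/-- The edge set of the sub snake graph consisting of tiles `lo, ..., n-1`. -/
def edgesFrom (d : ℕ → Dir) (lo n : ℕ) : Finset Edge :=
  (Finset.Ico lo n).biUnion fun i => tileEdges (tilePos d i)

/-- The vertex set of the sub snake graph consisting of tiles `lo, ..., n-1`. -/
def verticesFrom (d : ℕ → Dir) (lo n : ℕ) : Finset Vertex :=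
  (Finset.Ico lo n).biUnion fun i => tileVertices (tilePos d i)

/-- The edge set of the snake graph with `n` tiles and gluing directions `d`. -/
def edges (d : ℕ → Dir) (n : ℕ) : Finset Edge := edgesFrom d 0 n

/-- The vertex set of the snake graph with `n` tiles and gluing directions `d`. -/
def vertices (d : ℕ → Dir) (n : ℕ) : Finset Vertex := verticesFrom d 0 n

/-- The interior (glued) edge `e_i` shared by tiles `i` and `i+1`. -/
def glueEdge (d : ℕ → Dir) (i : ℕ) : Edge :=
  match d i with
  | .east => E (tilePos d i)
  | .north => N (tilePos d i)

/-- `M` is a perfect matching of the graph with vertex set `Vs` and edge set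
`Es`: a set of edges covering every vertex exactly once. -/
def IsPM (Vs : Finset Vertex) (Es : Finset Edge) (M : Finset Edge) : Prop :=
  M ⊆ Es ∧ ∀ v ∈ Vs, (M.filter fun e => v ∈ endpoints e).card = 1

/-- `M` is a perfect matching of the snake graph with `n` tiles and gluing
directions `d`. -/
def IsPerfectMatching (d : ℕ → Dir) (n : ℕ) (M : Finset Edge) : Prop :=
  IsPM (vertices d n) (edges d n) M

/-- A sign function on the snake graph with `n` tiles: on every tile,
`sgn N = sgn W`, `sgn S = sgn E`, and `sgn N ≠ sgn S`
(`true` stands for `+`, `false` for `−`). -/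
def IsSignFunction (d : ℕ → Dir) (n : ℕ) (f : Edge → Bool) : Prop :=
  ∀ i < n,
    f (N (tilePos d i)) = f (W (tilePos d i)) ∧
    f (S (tilePos d i)) = f (E (tilePos d i)) ∧
    f (N (tilePos d i)) ≠ f (S (tilePos d i))

/-- A snake graph is zig-zag if no three consecutive tiles are glued in the
same direction. -/
def IsZigZag (d : ℕ → Dir) (n : ℕ) : Prop :=
  ∀ i, i + 2 < n → d i ≠ d (i + 1)

/-- A snake graph is straight if all gluings are in the same direction. -/
def IsStraight (d : ℕ → Dir) (n : ℕ) : Prop :=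
  ∀ i j, i + 1 < n → j + 1 < n → d i = d j

end SnakeGraph

namespace SnakeGraph

variable {d : ℕ → Dir} {n i : ℕ} {f : Edge → Bool}

lemma glueEdge_of_east (h : d i = .east) : glueEdge d i = E (tilePos d i) := by
  simp [glueEdge, h]

lemma glueEdge_of_north (h : d i = .north) : glueEdge d i = N (tilePos d i) := by
  simp [glueEdge, h]

lemma E_tilePos_eq_W_tilePos_succ (h : d i = .east) :
    E (tilePos d i) = W (tilePos d (i + 1)) := by
  simp [tilePos, h, stepDir, E, W, Prod.ext_iff]

lemma N_tilePos_eq_S_tilePos_succ (h : d i = .north) :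
    N (tilePos d i) = S (tilePos d (i + 1)) := by
  simp [tilePos, h, stepDir, N, S, Prod.ext_iff]

lemma IsSignFunction.W_ne_E (hf : IsSignFunction d n f) (hi : i < n) :
    f (W (tilePos d i)) ≠ f (E (tilePos d i)) := by
  obtain ⟨hNW, hSE, hNS⟩ := hf i hi
  rwa [← hNW, ← hSE]

lemma IsSignFunction.S_ne_N (hf : IsSignFunction d n f) (hi : i < n) :
    f (S (tilePos d i)) ≠ f (N (tilePos d i)) :=
  fun h => (hf i hi).2.2 h.symm

lemma IsSignFunction.glueEdge_ne_glueEdge_succ (hf : IsSignFunction d n f) (hi : i + 2 < n)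
    (hd : d i = d (i + 1)) : f (glueEdge d i) ≠ f (glueEdge d (i + 1)) := by
  cases hdi : d i with
  | east =>
    rw [glueEdge_of_east hdi, E_tilePos_eq_W_tilePos_succ hdi, glueEdge_of_east (hd ▸ hdi)]
    exact hf.W_ne_E (by omega)
  | north =>
    rw [glueEdge_of_north hdi, N_tilePos_eq_S_tilePos_succ hdi, glueEdge_of_north (hd ▸ hdi)]
    exact hf.S_ne_N (by omega)

theorem isZigZag_of_isSignFunction (hf : IsSignFunction d n f)
    (hglue : ∀ i, i + 1 < n → f (glueEdge d i) = false) : IsZigZag d n :=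
  fun i hi hd => hf.glueEdge_ne_glueEdge_succ hi hd
    ((hglue i (by omega)).trans (hglue (i + 1) (by omega)).symm)

/-- The antidiagonal `x + y` of the right endpoint of a horizontal edge, resp. of the lower
endpoint of a vertical one. On the tile at `p`, the edges `N` and `W` get `p.1 + p.2 + 2` and
`p.1 + p.2`, while `S` and `E` get `p.1 + p.2 + 1`, so its parity is a sign function. -/
def antidiag (e : Edge) : ℤ := e.1.1 + e.1.2 + if e.2 then 1 else 0

def paritySign (c : Bool) (e : Edge) : Bool := xor c (antidiag e).bodd

lemma isSignFunction_paritySign (c : Bool) : IsSignFunction d n (paritySign c) := by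
  intro i _
  simp [paritySign, antidiag, N, W, S, E, Int.bodd_add]

lemma tilePos_fst_add_snd (d : ℕ → Dir) : ∀ i, (tilePos d i).1 + (tilePos d i).2 = i
  | 0 => rfl
  | i + 1 => by
    have := tilePos_fst_add_snd d i
    cases h : d i <;>
      simp only [tilePos, stepDir, h, Prod.fst_add, Prod.snd_add, add_zero, Nat.cast_add,
        Nat.cast_one] <;> omega

lemma antidiag_glueEdge_of_east (h : d i = .east) : antidiag (glueEdge d i) = i + 1 := by
  have := tilePos_fst_add_snd d i
  simp only [antidiag, glueEdge_of_east h, E, Bool.false_eq_true, ↓reduceIte, add_zero]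
  omega

lemma antidiag_glueEdge_of_north (h : d i = .north) : antidiag (glueEdge d i) = i + 2 := by
  have := tilePos_fst_add_snd d i
  simp only [antidiag, glueEdge_of_north h, N, ↓reduceIte]
  omega

lemma bodd_antidiag_glueEdge_succ (h : d i ≠ d (i + 1)) :
    (antidiag (glueEdge d (i + 1))).bodd = (antidiag (glueEdge d i)).bodd := by
  cases hi : d i <;> cases hi' : d (i + 1) <;>
    simp_all [antidiag_glueEdge_of_east, antidiag_glueEdge_of_north, Int.bodd_add, Int.bodd_two]

lemma IsZigZag.bodd_antidiag_glueEdge (hz : IsZigZag d n) :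
    ∀ i, i + 1 < n → (antidiag (glueEdge d i)).bodd = (antidiag (glueEdge d 0)).bodd
  | 0, _ => rfl
  | i + 1, hi =>
    (bodd_antidiag_glueEdge_succ (hz i hi)).trans (hz.bodd_antidiag_glueEdge i (by omega))

theorem exists_isSignFunction_glueEdge_false (hz : IsZigZag d n) :
    ∃ f, IsSignFunction d n f ∧ ∀ i, i + 1 < n → f (glueEdge d i) = false :=
  ⟨paritySign (antidiag (glueEdge d 0)).bodd, isSignFunction_paritySign _,
    fun i hi => by simp [paritySign, hz.bodd_antidiag_glueEdge i hi]⟩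

end SnakeGraph

open SnakeGraph in
theorem signFunction_allGlueMinus_iff_zigzag_general (d : ℕ → Dir) (n : ℕ) :
    (∃ f : Edge → Bool, IsSignFunction d n f ∧
        ∀ i, i + 1 < n → f (glueEdge d i) = false) ↔
      IsZigZag d n :=
  ⟨fun ⟨_, hf, hglue⟩ => isZigZag_of_isSignFunction hf hglue,
    exists_isSignFunction_glueEdge_false⟩

open SnakeGraph in
/-- A snake graph with at least two tiles admits a sign function in which
every interior (glued) edge has sign `−` iff it is zig-zag. -/
theorem signFunction_allGlueMinus_iff_zigzag (d : ℕ → Dir) (n : ℕ)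
    (hn : 2 ≤ n) :
    (∃ f : Edge → Bool, IsSignFunction d n f ∧
        ∀ i, i + 1 < n → f (glueEdge d i) = false) ↔
      IsZigZag d n :=
  signFunction_allGlueMinus_iff_zigzag_general d n
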